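/- arXiv:1702.06690 — 8 statements merged into one kernel-verified Lean document; each statement's English description precedes it below -/
import Mathlib

section
/- Suppose Q ≤ Ĥ. Then the pair (α̂, Υ̂) is feasible and optimal for the amplifier power minimization problem: 0 ≤ α̂ ≤ 1, Φ(α̂, Υ̂) = Q, and for every feasible pair (α, Υ) one has Ω(α̂, Υ̂) ≤ Ω(α, Υ). -/
/-- Theorem 1 of the paper (optimality of the maximum-efficiency energy transfer
power): if `Q ≤ Ĥ`, then `(α̂, Υ̂)` is feasible with the harvesting constraint tight,
and it minimizes the average amplifier power consumption `Ω(α,Υ) = α·Υ/θ(Υ)`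
over all feasible pairs. -/
theorem optimal_energy_transfer
    (Υmax h : ℝ) (hΥmax : 0 < Υmax) (hh : 0 < h)
    (θ η : ℝ → ℝ)
    (hθpos : ∀ Υ : ℝ, 0 < Υ → Υ ≤ Υmax → 0 < θ Υ)
    (hηpos : ∀ p : ℝ, 0 ≤ η p)
    (Q : ℝ) (hQ : 0 ≤ Q)
    (μhat Υhat : ℝ) (hμhat : 0 ≤ μhat)
    (hΥhat1 : 0 < Υhat) (hΥhat2 : Υhat ≤ Υmax)
    (hdual : ∀ Υ : ℝ, 0 < Υ → Υ ≤ Υmax → μhat * (η (h * Υ) * h) ≤ 1 / θ Υ)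
    (htight : 1 / θ Υhat = μhat * (η (h * Υhat) * h))
    (Hhat : ℝ) (hHhat : Hhat = η (h * Υhat) * h * Υhat)
    (αhat : ℝ) (hαhat : αhat = Q / Hhat)
    (hQH : Q ≤ Hhat) :
    (0 ≤ αhat ∧ αhat ≤ 1) ∧
    αhat * (η (h * Υhat) * h * Υhat) = Q ∧
    (∀ α Υ : ℝ, 0 ≤ α → α ≤ 1 → 0 < Υ → Υ ≤ Υmax →
      Q ≤ α * (η (h * Υ) * h * Υ) →
      αhat * Υhat / θ Υhat ≤ α * Υ / θ Υ) := by
  have hθh : 0 < θ Υhat := hθpos _ hΥhat1 hΥhat2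
  have hinv : 0 < 1 / θ Υhat := by positivity
  have hηh : 0 < η (h * Υhat) * h := by
    rcases (hηpos (h * Υhat)).lt_or_eq with hlt | heq
    · positivity
    · exfalso; rw [htight, ← heq] at hinv; simp at hinv
  have hH : 0 < Hhat := by rw [hHhat]; positivity
  have hα0 : 0 ≤ αhat := by rw [hαhat]; positivity
  have hα1 : αhat ≤ 1 := by rw [hαhat]; exact div_le_one_of_le₀ hQH hH.le
  have htightQ : αhat * (η (h * Υhat) * h * Υhat) = Q := by
    rw [hαhat, ← hHhat]; field_simp
  refine ⟨⟨hα0, hα1⟩, htightQ, ?_⟩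
  intro α Υ hα0' hα1' hΥ1 hΥ2 hfeas
  have hθ : 0 < θ Υ := hθpos _ hΥ1 hΥ2
  have key : αhat * Υhat / θ Υhat = μhat * Q := by
    rw [div_eq_mul_one_div, htight, ← htightQ]; ring
  rw [key]
  have h1 : μhat * Q ≤ μhat * (α * (η (h * Υ) * h * Υ)) :=
    mul_le_mul_of_nonneg_left hfeas hμhat
  have h2 : μhat * (α * (η (h * Υ) * h * Υ)) = (α * Υ) * (μhat * (η (h * Υ) * h)) := by ring
  have h3 : (α * Υ) * (μhat * (η (h * Υ) * h)) ≤ (α * Υ) * (1 / θ Υ) :=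
    mul_le_mul_of_nonneg_left (hdual Υ hΥ1 hΥ2) (by positivity)
  calc μhat * Q ≤ (α * Υ) * (1 / θ Υ) := by rw [h2] at h1; linarith
    _ = α * Υ / θ Υ := by field_simp
end

section
/- Every feasible pair (α, Υ) satisfies Ω(α, Υ) ≥ μ̂·Q; that is, μ̂·Q is a lower bound on the average amplifier power consumption over the feasible set. -/
/-- Weak duality bound: every feasible pair `(α, Υ)` satisfies
`Ω(α, Υ) = α·Υ/θ(Υ) ≥ μ̂·Q`, i.e. `μ̂·Q` is a lower bound on the average
amplifier power consumption over the feasible set. -/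
theorem amplifier_power_lower_bound
    (Υmax h : ℝ) (hΥmax : 0 < Υmax) (hh : 0 < h)
    (θ η : ℝ → ℝ)
    (hθpos : ∀ Υ : ℝ, 0 < Υ → Υ ≤ Υmax → 0 < θ Υ)
    (hηpos : ∀ p : ℝ, 0 ≤ η p)
    (Q : ℝ) (hQ : 0 ≤ Q)
    (μhat Υhat : ℝ) (hμhat : 0 ≤ μhat)
    (hΥhat1 : 0 < Υhat) (hΥhat2 : Υhat ≤ Υmax)
    (hdual : ∀ Υ : ℝ, 0 < Υ → Υ ≤ Υmax → μhat * (η (h * Υ) * h) ≤ 1 / θ Υ)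
    (htight : 1 / θ Υhat = μhat * (η (h * Υhat) * h)) :
    ∀ α Υ : ℝ, 0 ≤ α → α ≤ 1 → 0 < Υ → Υ ≤ Υmax →
      Q ≤ α * (η (h * Υ) * h * Υ) →
      μhat * Q ≤ α * Υ / θ Υ := by
  intro α Υ hα0 hα1 hΥ0 hΥm hfeas
  have hθ := hθpos Υ hΥ0 hΥm
  have hd := hdual Υ hΥ0 hΥm
  have hαΥ : 0 ≤ α * Υ := mul_nonneg hα0 hΥ0.le
  have h1 : μhat * Q ≤ μhat * (α * (η (h * Υ) * h * Υ)) :=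
    mul_le_mul_of_nonneg_left hfeas hμhat
  have h2 : μhat * (α * (η (h * Υ) * h * Υ)) = (α * Υ) * (μhat * (η (h * Υ) * h)) := by
    ring
  have h3 : (α * Υ) * (μhat * (η (h * Υ) * h)) ≤ (α * Υ) * (1 / θ Υ) :=
    mul_le_mul_of_nonneg_left hd hαΥ
  calc μhat * Q ≤ (α * Υ) * (μhat * (η (h * Υ) * h)) := h2 ▸ h1
    _ ≤ (α * Υ) * (1 / θ Υ) := h3
    _ = α * Υ / θ Υ := by ring
end

section
/- Suppose Q ≤ Ĥ. Then the constructed point attains the dual bound with the constraint tight: 0 ≤ α̂ ≤ 1, Φ(α̂, Υ̂) = Q, and Ω(α̂, Υ̂) = μ̂·Q. -/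
/-- If `Q ≤ Ĥ`, the constructed point `(α̂, Υ̂)` attains the dual bound with the
harvesting constraint tight: `0 ≤ α̂ ≤ 1`, `Φ(α̂, Υ̂) = Q`, and `Ω(α̂, Υ̂) = μ̂·Q`. -/
theorem constructed_point_attains_dual_bound
    (Υmax h : ℝ) (hΥmax : 0 < Υmax) (hh : 0 < h)
    (θ η : ℝ → ℝ)
    (hθpos : ∀ Υ : ℝ, 0 < Υ → Υ ≤ Υmax → 0 < θ Υ)
    (hηpos : ∀ p : ℝ, 0 ≤ η p)
    (Q : ℝ) (hQ : 0 ≤ Q)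
    (μhat Υhat : ℝ) (hμhat : 0 ≤ μhat)
    (hΥhat1 : 0 < Υhat) (hΥhat2 : Υhat ≤ Υmax)
    (hdual : ∀ Υ : ℝ, 0 < Υ → Υ ≤ Υmax → μhat * (η (h * Υ) * h) ≤ 1 / θ Υ)
    (htight : 1 / θ Υhat = μhat * (η (h * Υhat) * h))
    (Hhat : ℝ) (hHhat : Hhat = η (h * Υhat) * h * Υhat)
    (αhat : ℝ) (hαhat : αhat = Q / Hhat)
    (hQH : Q ≤ Hhat) :
    (0 ≤ αhat ∧ αhat ≤ 1) ∧
    αhat * (η (h * Υhat) * h * Υhat) = Q ∧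
    αhat * Υhat / θ Υhat = μhat * Q := by
  have hθ : 0 < θ Υhat := hθpos Υhat hΥhat1 hΥhat2
  have hH0 : 0 ≤ Hhat := by
    rw [hHhat]
    exact mul_nonneg (mul_nonneg (hηpos _) hh.le) hΥhat1.le
  rcases eq_or_lt_of_le hH0 with hH | hH
  · -- Hhat = 0, so Q = 0 and αhat = 0
    have hQ0 : Q = 0 := le_antisymm (hH ▸ hQH) hQ
    have hα0 : αhat = 0 := by rw [hαhat, hQ0, zero_div]
    refine ⟨⟨by rw [hα0], by rw [hα0]; norm_num⟩, ?_, ?_⟩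
    · rw [hα0, hQ0, zero_mul]
    · rw [hα0, hQ0, zero_mul, zero_div, mul_zero]
  · have hHne : Hhat ≠ 0 := ne_of_gt hH
    have hΦ : αhat * (η (h * Υhat) * h * Υhat) = Q := by
      rw [hαhat, ← hHhat, div_mul_cancel₀ _ hHne]
    refine ⟨⟨by rw [hαhat]; exact div_nonneg hQ hH0, by rw [hαhat]; exact div_le_one_of_le₀ hQH hH0⟩, hΦ, ?_⟩
    have : αhat * Υhat / θ Υhat = αhat * Υhat * (1 / θ Υhat) := by ring
    rw [this, htight]
    calc αhat * Υhat * (μhat * (η (h * Υhat) * h))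
        = μhat * (αhat * (η (h * Υhat) * h * Υhat)) := by ring
      _ = μhat * Q := by rw [hΦ]
end

section
/- The dual function at μ̂ equals μ̂·Q: for all α ∈ [0,1] and Υ ∈ (0, Υmax], the Lagrangian L(α, Υ, μ̂) = Ω(α, Υ) − μ̂·(Φ(α, Υ) − Q) satisfies L(α, Υ, μ̂) ≥ μ̂·Q, and L(α, Υ̂, μ̂) = μ̂·Q for every α ∈ [0,1]; hence μ̂·Q is the minimum of L(·, ·, μ̂) over [0,1] × (0, Υmax]. -/
/-- The dual function at `μ̂` equals `μ̂·Q`: for all `α ∈ [0,1]` and `Υ ∈ (0, Υmax]`,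
the Lagrangian `L(α,Υ,μ̂) = Ω(α,Υ) − μ̂·(Φ(α,Υ) − Q)` satisfies `L(α,Υ,μ̂) ≥ μ̂·Q`,
with equality at `Υ = Υ̂` for every `α ∈ [0,1]`; hence `μ̂·Q` is the least value of
`L(·,·,μ̂)` over `[0,1] × (0, Υmax]`. -/
theorem dual_function_value
    (Υmax h : ℝ) (hΥmax : 0 < Υmax) (hh : 0 < h)
    (θ η : ℝ → ℝ)
    (hθpos : ∀ Υ : ℝ, 0 < Υ → Υ ≤ Υmax → 0 < θ Υ)
    (hηpos : ∀ p : ℝ, 0 ≤ η p)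
    (Q : ℝ) (hQ : 0 ≤ Q)
    (μhat Υhat : ℝ) (hμhat : 0 ≤ μhat)
    (hΥhat1 : 0 < Υhat) (hΥhat2 : Υhat ≤ Υmax)
    (hdual : ∀ Υ : ℝ, 0 < Υ → Υ ≤ Υmax → μhat * (η (h * Υ) * h) ≤ 1 / θ Υ)
    (htight : 1 / θ Υhat = μhat * (η (h * Υhat) * h))
    (L : ℝ → ℝ → ℝ)
    (hL : ∀ α Υ : ℝ,
      L α Υ = α * Υ / θ Υ - μhat * (α * (η (h * Υ) * h * Υ) - Q)) :
    (∀ α Υ : ℝ, 0 ≤ α → α ≤ 1 → 0 < Υ → Υ ≤ Υmax → μhat * Q ≤ L α Υ) ∧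
    (∀ α : ℝ, 0 ≤ α → α ≤ 1 → L α Υhat = μhat * Q) ∧
    IsLeast {l : ℝ | ∃ α Υ : ℝ, 0 ≤ α ∧ α ≤ 1 ∧ 0 < Υ ∧ Υ ≤ Υmax ∧ l = L α Υ}
      (μhat * Q) := by
  have key : ∀ α Υ : ℝ, 0 ≤ α → 0 < Υ → Υ ≤ Υmax →
      L α Υ = α * Υ * (1 / θ Υ - μhat * (η (h * Υ) * h)) + μhat * Q := by
    intro α Υ _ hΥ hΥm
    have hθ := hθpos Υ hΥ hΥm
    rw [hL]
    field_simp
    ring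
  have lb : ∀ α Υ : ℝ, 0 ≤ α → α ≤ 1 → 0 < Υ → Υ ≤ Υmax → μhat * Q ≤ L α Υ := by
    intro α Υ hα hα1 hΥ hΥm
    rw [key α Υ hα hΥ hΥm]
    have h1 : 0 ≤ α * Υ * (1 / θ Υ - μhat * (η (h * Υ) * h)) := by
      apply mul_nonneg (mul_nonneg hα hΥ.le)
      linarith [hdual Υ hΥ hΥm]
    linarith
  have eq : ∀ α : ℝ, 0 ≤ α → α ≤ 1 → L α Υhat = μhat * Q := by
    intro α hα hα1
    rw [key α Υhat hα hΥhat1 hΥhat2, htight]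
    ring
  refine ⟨lb, eq, ⟨⟨1, Υhat, zero_le_one, le_refl 1, hΥhat1, hΥhat2, (eq 1 zero_le_one le_rfl).symm⟩, ?_⟩⟩
  rintro l ⟨α, Υ, hα, hα1, hΥ, hΥm, rfl⟩
  exact lb α Υ hα hα1 hΥ hΥm
end

section
/- Suppose Q ≤ Ĥ. Then μ̂·Q is the least element of the set {Ω(α, Υ) : (α, Υ) feasible}; equivalently, the minimum achievable average amplifier power consumption equals Q/(θ(Υ̂)·η(h·Υ̂)·h). -/
/-- If `Q ≤ Ĥ`, then `μ̂·Q` is the least element of the set of achievable average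
amplifier power consumptions `{Ω(α,Υ) : (α,Υ) feasible}`; equivalently, the minimum
achievable average amplifier power consumption equals `Q/(θ(Υ̂)·η(h·Υ̂)·h)`. -/
theorem min_amplifier_power
    (Υmax h : ℝ) (hΥmax : 0 < Υmax) (hh : 0 < h)
    (θ η : ℝ → ℝ)
    (hθpos : ∀ Υ : ℝ, 0 < Υ → Υ ≤ Υmax → 0 < θ Υ)
    (hηpos : ∀ p : ℝ, 0 ≤ η p)
    (Q : ℝ) (hQ : 0 ≤ Q)
    (μhat Υhat : ℝ) (hμhat : 0 ≤ μhat)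
    (hΥhat1 : 0 < Υhat) (hΥhat2 : Υhat ≤ Υmax)
    (hdual : ∀ Υ : ℝ, 0 < Υ → Υ ≤ Υmax → μhat * (η (h * Υ) * h) ≤ 1 / θ Υ)
    (htight : 1 / θ Υhat = μhat * (η (h * Υhat) * h))
    (Hhat : ℝ) (hHhat : Hhat = η (h * Υhat) * h * Υhat)
    (hQH : Q ≤ Hhat) :
    IsLeast {p : ℝ | ∃ α Υ : ℝ, 0 ≤ α ∧ α ≤ 1 ∧ 0 < Υ ∧ Υ ≤ Υmax ∧
        Q ≤ α * (η (h * Υ) * h * Υ) ∧ p = α * Υ / θ Υ}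
      (μhat * Q) ∧
    μhat * Q = Q / (θ Υhat * η (h * Υhat) * h) := by
  have hθh : 0 < θ Υhat := hθpos Υhat hΥhat1 hΥhat2
  set E : ℝ := η (h * Υhat) * h with hE
  have hinv : 0 < 1 / θ Υhat := by positivity
  have hμE : 0 < μhat * E := htight ▸ hinv
  have hEpos : 0 < E := by
    rcases lt_or_eq_of_le (hμhat) with hμ | hμ
    · nlinarith
    · nlinarith
  have hμpos : 0 < μhat := by nlinarith
  have hHpos : 0 < Hhat := by rw [hHhat]; positivity
  have hμeq : μhat = 1 / (θ Υhat * E) := by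
    field_simp at htight ⊢
    nlinarith
  refine ⟨⟨⟨Q / Hhat, Υhat, by positivity, by
      rw [div_le_one hHpos]; exact hQH, hΥhat1, hΥhat2, ?_, ?_⟩, ?_⟩, ?_⟩
  · rw [hHhat] at *
    rw [div_mul_cancel₀ _ (ne_of_gt hHpos)]
  · -- μhat * Q = (Q / Hhat) * Υhat / θ Υhat
    rw [hμeq, hHhat]
    field_simp
  · rintro p ⟨α, Υ, hα0, hα1, hΥ0, hΥ1, hfeas, hp⟩
    have hθΥ : 0 < θ Υ := hθpos Υ hΥ0 hΥ1
    have hd := hdual Υ hΥ0 hΥ1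
    have key : μhat * (α * (η (h * Υ) * h * Υ)) ≤ α * Υ / θ Υ := by
      rw [div_eq_mul_inv, ← one_div]
      nlinarith [mul_nonneg hα0 (le_of_lt hΥ0)]
    calc μhat * Q ≤ μhat * (α * (η (h * Υ) * h * Υ)) := by
          exact mul_le_mul_of_nonneg_left hfeas hμhat
      _ ≤ p := hp ▸ key
  · have hηh : 0 < η (h * Υhat) := by nlinarith
    rw [hμeq, hE, mul_assoc, one_div, inv_mul_eq_div]
end

section
/- If the harvested power p ↦ η(p)·p is nondecreasing on (0, h·Υmax], then the function Δ is nondecreasing on the interval [κ1, κ2]. -/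
/-- If the harvested power `p ↦ η(p)·p` is nondecreasing on `(0, h·Υmax]`, then
the per-epoch stored energy change `Δ` is nondecreasing on the second control
region `[κ1, κ2]` (where the energy transfer power is controlled). -/
theorem delta_monotone_region2
    (h Υmax Υhat αmin τtgt βΥ βτ φ δ : ℝ)
    (hh : 0 < h) (hΥmax : 0 < Υmax)
    (hΥhat1 : 0 < Υhat) (hΥhat2 : Υhat ≤ Υmax)
    (hαmin1 : 0 ≤ αmin) (hαmin2 : αmin ≤ 1)
    (hτtgt : 0 < τtgt) (hβΥ : 0 < βΥ) (hβτ : 0 < βτ)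
    (hφ : 0 ≤ φ) (hδ : 0 ≤ δ)
    (η : ℝ → ℝ) (hη : ∀ p : ℝ, 0 ≤ η p)
    (κ1 κ2 : ℝ) (hκ1 : κ1 = 1 - αmin) (hκ2 : κ2 = κ1 + (Υmax - Υhat) / βΥ)
    (ωα ωΥ ωτ : ℝ → ℝ)
    (hω1 : ∀ x : ℝ, 0 ≤ x → x ≤ κ1 →
      ωα x = x + αmin ∧ ωΥ x = Υhat ∧ ωτ x = τtgt)
    (hω2 : ∀ x : ℝ, κ1 < x → x ≤ κ2 →
      ωα x = 1 ∧ ωΥ x = βΥ * (x - κ1) + Υhat ∧ ωτ x = τtgt)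
    (hω3 : ∀ x : ℝ, κ2 < x →
      ωα x = 1 ∧ ωΥ x = Υmax ∧ ωτ x = βτ * (x - κ2) + τtgt)
    (Δ : ℝ → ℝ)
    (hΔ : ∀ x : ℝ,
      Δ x = (ωα x * η (h * ωΥ x) * h * ωΥ x - φ - δ / ωτ x) * ωτ x)
    (hharv : ∀ p q : ℝ, 0 < p → p ≤ q → q ≤ h * Υmax → η p * p ≤ η q * q) :
    MonotoneOn Δ (Set.Icc κ1 κ2) := by

  have hκ12 : κ1 ≤ κ2 := by
    rw [hκ2]
    have : 0 ≤ (Υmax - Υhat) / βΥ := div_nonneg (by linarith) hβΥ.le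
    linarith
  -- key: on [κ1, κ2], Δ x has the uniform form
  have key : ∀ x ∈ Set.Icc κ1 κ2,
      Δ x = (η (h * (βΥ * (x - κ1) + Υhat)) * (h * (βΥ * (x - κ1) + Υhat))
        - φ - δ / τtgt) * τtgt := by
    intro x hx
    obtain ⟨hx1, hx2⟩ := hx
    rcases eq_or_lt_of_le hx1 with heq | hlt
    · -- x = κ1
      obtain ⟨ha, hb, hc⟩ := hω1 x (by rw [← heq, hκ1]; linarith)
        (le_of_eq heq.symm)
      have ha' : ωα x = 1 := by rw [ha, ← heq, hκ1]; ring
      rw [hΔ, ha', hb, hc, ← heq]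
      ring_nf
    · obtain ⟨ha, hb, hc⟩ := hω2 x hlt hx2
      rw [hΔ, ha, hb, hc]
      ring_nf
  intro a ha b hb hab
  rw [key a ha, key b hb]
  set ua := h * (βΥ * (a - κ1) + Υhat) with hua
  set ub := h * (βΥ * (b - κ1) + Υhat) with hub
  have hpa : 0 < ua := by
    apply mul_pos hh
    have : 0 ≤ βΥ * (a - κ1) := mul_nonneg hβΥ.le (by linarith [ha.1])
    linarith
  have hpq : ua ≤ ub := by
    apply mul_le_mul_of_nonneg_left _ hh.le
    have : βΥ * (a - κ1) ≤ βΥ * (b - κ1) := by nlinarith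
    linarith
  have hqm : ub ≤ h * Υmax := by
    apply mul_le_mul_of_nonneg_left _ hh.le
    have hb2 : b ≤ κ2 := hb.2
    have : βΥ * (b - κ1) ≤ βΥ * (κ2 - κ1) := by nlinarith
    have h2 : βΥ * (κ2 - κ1) = Υmax - Υhat := by
      rw [hκ2]; field_simp; ring
    linarith
  have := hharv ua ub hpa hpq hqm
  have := hτtgt
  nlinarith
end

section
/- If η(h·Υmax)·h·Υmax ≥ φ, then the function Δ is nondecreasing on the interval [κ2, ∞). -/
/-!
On `[κ2, ∞)` the control saturates the first two components, `ωα = 1` and `ωΥ = Υmax`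
(also at `κ2` itself, reached from region 1 when `Υhat = Υmax` and from region 2 otherwise),
while `ωτ` is the affine increasing function `βτ (x - κ2) + τtgt > 0`. Hence there
`Δ = (η(h Υmax) h Υmax - φ) ωτ - δ`, which is nondecreasing because the harvested power at
full transmit power covers the idle consumption `φ`.
-/

lemma sub_sub_div_mul_self {a φ δ τ : ℝ} (hτ : τ ≠ 0) :
    (a - φ - δ / τ) * τ = (a - φ) * τ - δ := by
  field_simp

section Control

variable {Υmax Υhat αmin τtgt βΥ βτ κ1 κ2 : ℝ} {ωα ωΥ ωτ : ℝ → ℝ}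

lemma control_at_region3_boundary
    (hΥhat : Υhat ≤ Υmax) (hαmin : αmin ≤ 1) (hβΥ : 0 < βΥ)
    (hκ1 : κ1 = 1 - αmin) (hκ2 : κ2 = κ1 + (Υmax - Υhat) / βΥ)
    (hω1 : ∀ x : ℝ, 0 ≤ x → x ≤ κ1 →
      ωα x = x + αmin ∧ ωΥ x = Υhat ∧ ωτ x = τtgt)
    (hω2 : ∀ x : ℝ, κ1 < x → x ≤ κ2 →
      ωα x = 1 ∧ ωΥ x = βΥ * (x - κ1) + Υhat ∧ ωτ x = τtgt) :
    ωα κ2 = 1 ∧ ωΥ κ2 = Υmax ∧ ωτ κ2 = τtgt := by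
  have hgap : 0 ≤ (Υmax - Υhat) / βΥ := div_nonneg (sub_nonneg.mpr hΥhat) hβΥ.le
  rcases hgap.eq_or_lt with hzero | hpos
  · have hΥ : Υhat = Υmax := by
      have := (div_eq_zero_iff.mp hzero.symm).resolve_right hβΥ.ne'
      linarith
    have hκ : κ2 = κ1 := by rw [hκ2, ← hzero, add_zero]
    obtain ⟨ha, hb, hc⟩ := hω1 κ2 (by linarith) hκ.le
    exact ⟨by rw [ha, hκ, hκ1]; ring, hb.trans hΥ, hc⟩
  · obtain ⟨ha, hb, hc⟩ := hω2 κ2 (by linarith) le_rfl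
    refine ⟨ha, ?_, hc⟩
    rw [hb, hκ2]
    field_simp
    ring

lemma control_on_region3 (hτtgt : 0 < τtgt) (hβτ : 0 < βτ)
    (hbdry : ωα κ2 = 1 ∧ ωΥ κ2 = Υmax ∧ ωτ κ2 = τtgt)
    (hω3 : ∀ x : ℝ, κ2 < x →
      ωα x = 1 ∧ ωΥ x = Υmax ∧ ωτ x = βτ * (x - κ2) + τtgt)
    {x : ℝ} (hx : κ2 ≤ x) :
    ωα x = 1 ∧ ωΥ x = Υmax ∧ ωτ x = βτ * (x - κ2) + τtgt ∧ 0 < ωτ x := by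
  rcases hx.eq_or_lt with rfl | hlt
  · obtain ⟨ha, hb, hc⟩ := hbdry
    exact ⟨ha, hb, by rw [hc]; ring, hc ▸ hτtgt⟩
  · obtain ⟨ha, hb, hc⟩ := hω3 x hlt
    exact ⟨ha, hb, hc, hc ▸ by nlinarith⟩

end Control

theorem delta_monotone_region3_general
    (h Υmax Υhat αmin τtgt βΥ βτ φ δ : ℝ)
    (hΥhat2 : Υhat ≤ Υmax)
    (hαmin2 : αmin ≤ 1)
    (hτtgt : 0 < τtgt) (hβΥ : 0 < βΥ) (hβτ : 0 < βτ)
    (η : ℝ → ℝ)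
    (κ1 κ2 : ℝ) (hκ1 : κ1 = 1 - αmin) (hκ2 : κ2 = κ1 + (Υmax - Υhat) / βΥ)
    (ωα ωΥ ωτ : ℝ → ℝ)
    (hω1 : ∀ x : ℝ, 0 ≤ x → x ≤ κ1 →
      ωα x = x + αmin ∧ ωΥ x = Υhat ∧ ωτ x = τtgt)
    (hω2 : ∀ x : ℝ, κ1 < x → x ≤ κ2 →
      ωα x = 1 ∧ ωΥ x = βΥ * (x - κ1) + Υhat ∧ ωτ x = τtgt)
    (hω3 : ∀ x : ℝ, κ2 < x →
      ωα x = 1 ∧ ωΥ x = Υmax ∧ ωτ x = βτ * (x - κ2) + τtgt)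
    (Δ : ℝ → ℝ)
    (hΔ : ∀ x : ℝ,
      Δ x = (ωα x * η (h * ωΥ x) * h * ωΥ x - φ - δ / ωτ x) * ωτ x)
    (hmaxharv : φ ≤ η (h * Υmax) * h * Υmax) :
    MonotoneOn Δ (Set.Ici κ2) := by
  set surplus := η (h * Υmax) * h * Υmax - φ
  have hbdry := control_at_region3_boundary hΥhat2 hαmin2 hβΥ hκ1 hκ2 hω1 hω2
  have hΔ_affine : Set.EqOn (fun x ↦ surplus * (βτ * (x - κ2) + τtgt) - δ) Δ (Set.Ici κ2) := by
    intro x hx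
    obtain ⟨ha, hb, hc, hpos⟩ := control_on_region3 hτtgt hβτ hbdry hω3 hx
    rw [hΔ, ha, hb, one_mul, sub_sub_div_mul_self hpos.ne', hc]
  have hsurplus : 0 ≤ surplus := sub_nonneg.mpr hmaxharv
  have hmono : Monotone fun x ↦ surplus * (βτ * (x - κ2) + τtgt) - δ := by
    intro a b hab
    dsimp only
    gcongr
  exact (hmono.monotoneOn _).congr hΔ_affine

/-- If `η(h·Υmax)·h·Υmax ≥ φ`, then the per-epoch stored energy change `Δ` is
nondecreasing on the third control region `[κ2, ∞)` (where the wake-up interval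
is controlled). -/
theorem delta_monotone_region3
    (h Υmax Υhat αmin τtgt βΥ βτ φ δ : ℝ)
    (hh : 0 < h) (hΥmax : 0 < Υmax)
    (hΥhat1 : 0 < Υhat) (hΥhat2 : Υhat ≤ Υmax)
    (hαmin1 : 0 ≤ αmin) (hαmin2 : αmin ≤ 1)
    (hτtgt : 0 < τtgt) (hβΥ : 0 < βΥ) (hβτ : 0 < βτ)
    (hφ : 0 ≤ φ) (hδ : 0 ≤ δ)
    (η : ℝ → ℝ) (hη : ∀ p : ℝ, 0 ≤ η p)
    (κ1 κ2 : ℝ) (hκ1 : κ1 = 1 - αmin) (hκ2 : κ2 = κ1 + (Υmax - Υhat) / βΥ)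
    (ωα ωΥ ωτ : ℝ → ℝ)
    (hω1 : ∀ x : ℝ, 0 ≤ x → x ≤ κ1 →
      ωα x = x + αmin ∧ ωΥ x = Υhat ∧ ωτ x = τtgt)
    (hω2 : ∀ x : ℝ, κ1 < x → x ≤ κ2 →
      ωα x = 1 ∧ ωΥ x = βΥ * (x - κ1) + Υhat ∧ ωτ x = τtgt)
    (hω3 : ∀ x : ℝ, κ2 < x →
      ωα x = 1 ∧ ωΥ x = Υmax ∧ ωτ x = βτ * (x - κ2) + τtgt)
    (Δ : ℝ → ℝ)
    (hΔ : ∀ x : ℝ,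
      Δ x = (ωα x * η (h * ωΥ x) * h * ωΥ x - φ - δ / ωτ x) * ωτ x)
    (hmaxharv : φ ≤ η (h * Υmax) * h * Υmax) :
    MonotoneOn Δ (Set.Ici κ2) :=
  delta_monotone_region3_general h Υmax Υhat αmin τtgt βΥ βτ φ δ hΥhat2 hαmin2 hτtgt hβΥ hβτ η κ1 κ2
    hκ1 hκ2 ωα ωΥ ωτ hω1 hω2 hω3 Δ hΔ hmaxharv
end

section
/- If the harvested power p ↦ η(p)·p is nondecreasing on (0, h·Υmax] and η(h·Υmax)·h·Υmax ≥ φ, then the function Δ is nondecreasing on all of [0, ∞). -/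
/-- If the harvested power `p ↦ η(p)·p` is nondecreasing on `(0, h·Υmax]` and
`η(h·Υmax)·h·Υmax ≥ φ`, then the per-epoch stored energy change `Δ` is
nondecreasing on all of `[0, ∞)`. -/
theorem delta_monotone
    (h Υmax Υhat αmin τtgt βΥ βτ φ δ : ℝ)
    (hh : 0 < h) (hΥmax : 0 < Υmax)
    (hΥhat1 : 0 < Υhat) (hΥhat2 : Υhat ≤ Υmax)
    (hαmin1 : 0 ≤ αmin) (hαmin2 : αmin ≤ 1)
    (hτtgt : 0 < τtgt) (hβΥ : 0 < βΥ) (hβτ : 0 < βτ)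
    (hφ : 0 ≤ φ) (hδ : 0 ≤ δ)
    (η : ℝ → ℝ) (hη : ∀ p : ℝ, 0 ≤ η p)
    (κ1 κ2 : ℝ) (hκ1 : κ1 = 1 - αmin) (hκ2 : κ2 = κ1 + (Υmax - Υhat) / βΥ)
    (ωα ωΥ ωτ : ℝ → ℝ)
    (hω1 : ∀ x : ℝ, 0 ≤ x → x ≤ κ1 →
      ωα x = x + αmin ∧ ωΥ x = Υhat ∧ ωτ x = τtgt)
    (hω2 : ∀ x : ℝ, κ1 < x → x ≤ κ2 →
      ωα x = 1 ∧ ωΥ x = βΥ * (x - κ1) + Υhat ∧ ωτ x = τtgt)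
    (hω3 : ∀ x : ℝ, κ2 < x →
      ωα x = 1 ∧ ωΥ x = Υmax ∧ ωτ x = βτ * (x - κ2) + τtgt)
    (Δ : ℝ → ℝ)
    (hΔ : ∀ x : ℝ,
      Δ x = (ωα x * η (h * ωΥ x) * h * ωΥ x - φ - δ / ωτ x) * ωτ x)
    (hharv : ∀ p q : ℝ, 0 < p → p ≤ q → q ≤ h * Υmax → η p * p ≤ η q * q)
    (hmaxharv : φ ≤ η (h * Υmax) * h * Υmax) :
    MonotoneOn Δ (Set.Ici 0) := by
  have hκ1nn : 0 ≤ κ1 := by rw [hκ1]; linarith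
  have hdq : 0 ≤ (Υmax - Υhat) / βΥ := div_nonneg (by linarith) hβΥ.le
  have hκ12 : κ1 ≤ κ2 := by rw [hκ2]; linarith
  have hκ2k1 : κ2 - κ1 = (Υmax - Υhat) / βΥ := by rw [hκ2]; ring
  have hWκ2 : βΥ * (κ2 - κ1) + Υhat = Υmax := by
    rw [hκ2k1, mul_div_cancel₀ _ (ne_of_gt hβΥ)]; ring
  have hCnn : (0:ℝ) ≤ η (h * Υhat) * h * Υhat :=
    mul_nonneg (mul_nonneg (hη _) hh.le) hΥhat1.le
  have hα1 : κ1 + αmin = 1 := by rw [hκ1]; ring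
  have A1 : ∀ x, 0 ≤ x → x ≤ κ1 →
      Δ x = ((x + αmin) * (η (h * Υhat) * h * Υhat) - φ - δ / τtgt) * τtgt := by
    intro x hx0 hx1
    obtain ⟨h1, h2, h3⟩ := hω1 x hx0 hx1
    rw [hΔ, h1, h2, h3]; ring
  have A2 : ∀ x, κ1 ≤ x → x ≤ κ2 →
      Δ x = (η (h * (βΥ * (x - κ1) + Υhat)) * h * (βΥ * (x - κ1) + Υhat)
        - φ - δ / τtgt) * τtgt := by
    intro x hx1 hx2
    rcases eq_or_lt_of_le hx1 with heq | hlt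
    · subst heq
      obtain ⟨h1, h2, h3⟩ := hω1 κ1 hκ1nn le_rfl
      have hw : βΥ * (κ1 - κ1) + Υhat = Υhat := by ring
      rw [hΔ, h1, h2, h3, hα1, hw]; ring
    · obtain ⟨h1, h2, h3⟩ := hω2 x hlt hx2
      rw [hΔ, h1, h2, h3]; ring
  have A3 : ∀ x, κ2 ≤ x →
      Δ x = (η (h * Υmax) * h * Υmax - φ - δ / (βτ * (x - κ2) + τtgt))
        * (βτ * (x - κ2) + τtgt) := by
    intro x hx
    rcases eq_or_lt_of_le hx with heq | hlt
    · subst heq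
      have hT : βτ * (κ2 - κ2) + τtgt = τtgt := by ring
      rcases eq_or_lt_of_le hκ12 with h12 | h12
      · have hYY : Υmax = Υhat := by
          have h0 : (Υmax - Υhat) / βΥ = 0 := by rw [← hκ2k1, ← h12]; ring
          have := (div_eq_zero_iff.mp h0).resolve_right (ne_of_gt hβΥ)
          linarith
        obtain ⟨h1, h2, h3⟩ := hω1 κ2 (h12 ▸ hκ1nn) (le_of_eq h12.symm)
        have hα1' : κ2 + αmin = 1 := by rw [← h12]; exact hα1
        rw [hΔ, h1, h2, h3, hα1', hT, hYY]; ring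
      · obtain ⟨h1, h2, h3⟩ := hω2 κ2 h12 le_rfl
        rw [hΔ, h1, h2, h3, hWκ2, hT]; ring
    · obtain ⟨h1, h2, h3⟩ := hω3 x hlt
      rw [hΔ, h1, h2, h3]; ring
  have M1 : ∀ x y, 0 ≤ x → x ≤ y → y ≤ κ1 → Δ x ≤ Δ y := by
    intro x y hx0 hxy hy
    rw [A1 x hx0 (hxy.trans hy), A1 y (hx0.trans hxy) hy]
    have hxy' : (x + αmin) * (η (h * Υhat) * h * Υhat)
        ≤ (y + αmin) * (η (h * Υhat) * h * Υhat) :=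
      mul_le_mul_of_nonneg_right (by linarith) hCnn
    exact mul_le_mul_of_nonneg_right (by linarith) hτtgt.le
  have M2 : ∀ x y, κ1 ≤ x → x ≤ y → y ≤ κ2 → Δ x ≤ Δ y := by
    intro x y hx0 hxy hy
    rw [A2 x hx0 (hxy.trans hy), A2 y (hx0.trans hxy) hy]
    have hWx : Υhat ≤ βΥ * (x - κ1) + Υhat := by nlinarith
    have hWxy : βΥ * (x - κ1) + Υhat ≤ βΥ * (y - κ1) + Υhat := by nlinarith
    have hWy : βΥ * (y - κ1) + Υhat ≤ Υmax := by
      rw [← hWκ2]; nlinarith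
    have hp : 0 < h * (βΥ * (x - κ1) + Υhat) :=
      mul_pos hh (lt_of_lt_of_le hΥhat1 hWx)
    have hpq : h * (βΥ * (x - κ1) + Υhat) ≤ h * (βΥ * (y - κ1) + Υhat) :=
      mul_le_mul_of_nonneg_left hWxy hh.le
    have hqm : h * (βΥ * (y - κ1) + Υhat) ≤ h * Υmax :=
      mul_le_mul_of_nonneg_left hWy hh.le
    have hmain := hharv _ _ hp hpq hqm
    have hmain' : η (h * (βΥ * (x - κ1) + Υhat)) * h * (βΥ * (x - κ1) + Υhat)
        ≤ η (h * (βΥ * (y - κ1) + Υhat)) * h * (βΥ * (y - κ1) + Υhat) := by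
      rw [mul_assoc, mul_assoc]; exact hmain
    exact mul_le_mul_of_nonneg_right (by linarith) hτtgt.le
  have M3 : ∀ x y, κ2 ≤ x → x ≤ y → Δ x ≤ Δ y := by
    intro x y hx hxy
    rw [A3 x hx, A3 y (hx.trans hxy)]
    have hTx : 0 < βτ * (x - κ2) + τtgt := by nlinarith
    have hTy : 0 < βτ * (y - κ2) + τtgt := by nlinarith
    have hTxy : βτ * (x - κ2) + τtgt ≤ βτ * (y - κ2) + τtgt := by nlinarith
    have e1 : (η (h * Υmax) * h * Υmax - φ - δ / (βτ * (x - κ2) + τtgt))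
        * (βτ * (x - κ2) + τtgt)
        = (η (h * Υmax) * h * Υmax - φ) * (βτ * (x - κ2) + τtgt) - δ := by
      field_simp
    have e2 : (η (h * Υmax) * h * Υmax - φ - δ / (βτ * (y - κ2) + τtgt))
        * (βτ * (y - κ2) + τtgt)
        = (η (h * Υmax) * h * Υmax - φ) * (βτ * (y - κ2) + τtgt) - δ := by
      field_simp
    rw [e1, e2]
    have hKφ : (0:ℝ) ≤ η (h * Υmax) * h * Υmax - φ := by linarith
    have := mul_le_mul_of_nonneg_left hTxy hKφ
    linarith
  intro x hx y hy hxy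
  simp only [Set.mem_Ici] at hx hy
  rcases le_or_gt y κ1 with hy1 | hy1
  · exact M1 x y hx hxy hy1
  · rcases le_or_gt y κ2 with hy2 | hy2
    · rcases le_or_gt x κ1 with hx1 | hx1
      · exact (M1 x κ1 hx hx1 le_rfl).trans (M2 κ1 y le_rfl hy1.le hy2)
      · exact M2 x y hx1.le hxy hy2
    · rcases le_or_gt x κ1 with hx1 | hx1
      · exact ((M1 x κ1 hx hx1 le_rfl).trans (M2 κ1 κ2 le_rfl hκ12 le_rfl)).trans
          (M3 κ2 y le_rfl hy2.le)
      · rcases le_or_gt x κ2 with hx2 | hx2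
        · exact (M2 x κ2 hx1.le hx2 le_rfl).trans (M3 κ2 y le_rfl hy2.le)
        · exact M3 x y hx2.le hxy
end
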